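/- Let M = {x ∈ ℝ⁴ : x² + x⁴ > 0}. A continuously differentiable covector field A : M → ℝ⁴ satisfies the invariance conditions L_ξA = 0 on M for the six vector fields ξ = e₁, ξ = e₃, ξ = e₂ − e₄ = (0,1,0,−1), ξ = e₁₂ − e₁₄ = (−x²−x⁴, x¹, 0, −x¹), ξ = e₂₃ + e₃₄ = (0, −x³, x²+x⁴, x³) and ξ = e₂₄ = (0, x⁴, 0, x²) if and only if there exists a constant B ∈ ℝ such that for all x ∈ M: A₁(x) = A₃(x) = 0 and A₂(x) = A₄(x) = B/(x² + x⁴). (This is the class P₍₆,₆₎.) -/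

import Mathlib

open Real

/-- Partial derivative of a scalar function on ℝ⁴ in the j-th coordinate direction. -/
noncomputable def pd (j : Fin 4) (f : (Fin 4 → ℝ) → ℝ) (x : Fin 4 → ℝ) : ℝ :=
  fderiv ℝ f x (Pi.single j 1)

/-- The i-th component of the Lie derivative of the covector field A along
the vector field ξ at the point x:  Σ_j ξ^j ∂_j A_i + Σ_j A_j ∂_i ξ^j. -/
noncomputable def lieCov (ξ A : (Fin 4 → ℝ) → Fin 4 → ℝ) (x : Fin 4 → ℝ) (i : Fin 4) : ℝ :=
  (∑ j : Fin 4, ξ x j * pd j (fun y => A y i) x)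
    + ∑ j : Fin 4, A x j * pd i (fun y => ξ y j) x

/-- Invariance condition L_ξ A = 0 on all of ℝ⁴. -/
def PInvariant (ξ A : (Fin 4 → ℝ) → Fin 4 → ℝ) : Prop :=
  ∀ x i, lieCov ξ A x i = 0

/-- Invariance condition L_ξ A = 0 on a set M. -/
def PInvariantOn (ξ A : (Fin 4 → ℝ) → Fin 4 → ℝ) (M : Set (Fin 4 → ℝ)) : Prop :=
  ∀ x ∈ M, ∀ i, lieCov ξ A x i = 0

def e1 : (Fin 4 → ℝ) → Fin 4 → ℝ := fun _ => ![1, 0, 0, 0]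
def e2 : (Fin 4 → ℝ) → Fin 4 → ℝ := fun _ => ![0, 1, 0, 0]
def e3 : (Fin 4 → ℝ) → Fin 4 → ℝ := fun _ => ![0, 0, 1, 0]
def e4 : (Fin 4 → ℝ) → Fin 4 → ℝ := fun _ => ![0, 0, 0, 1]
def e12 : (Fin 4 → ℝ) → Fin 4 → ℝ := fun x => ![-x 1, x 0, 0, 0]
def e13 : (Fin 4 → ℝ) → Fin 4 → ℝ := fun x => ![x 2, 0, -x 0, 0]
def e23 : (Fin 4 → ℝ) → Fin 4 → ℝ := fun x => ![0, -x 2, x 1, 0]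
def e14 : (Fin 4 → ℝ) → Fin 4 → ℝ := fun x => ![x 3, 0, 0, x 0]
def e24 : (Fin 4 → ℝ) → Fin 4 → ℝ := fun x => ![0, x 3, 0, x 1]
def e34 : (Fin 4 → ℝ) → Fin 4 → ℝ := fun x => ![0, 0, x 3, x 2]

section Helpers

lemma pd_of_hasFDerivAt {f : (Fin 4 → ℝ) → ℝ} {L : (Fin 4 → ℝ) →L[ℝ] ℝ} {x}
    (h : HasFDerivAt f L x) (j : Fin 4) : pd j f x = L (Pi.single j 1) := by
  rw [pd, h.fderiv]

lemma pd_congr {f g : (Fin 4 → ℝ) → ℝ} {x} (h : f =ᶠ[nhds x] g) (j : Fin 4) :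
    pd j f x = pd j g x := by
  rw [pd, pd, h.fderiv_eq]

lemma hasF_coord (k : Fin 4) (x : Fin 4 → ℝ) :
    HasFDerivAt (fun y : Fin 4 → ℝ => y k)
      (ContinuousLinearMap.proj k : (Fin 4 → ℝ) →L[ℝ] ℝ) x :=
  (ContinuousLinearMap.proj k : (Fin 4 → ℝ) →L[ℝ] ℝ).hasFDerivAt

@[simp] lemma pd_const (j : Fin 4) (c : ℝ) (x : Fin 4 → ℝ) : pd j (fun _ => c) x = 0 := by
  simp [pd]

@[simp] lemma pd_coord (j k : Fin 4) (x : Fin 4 → ℝ) :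
    pd j (fun y => y k) x = if k = j then 1 else 0 := by
  rw [pd_of_hasFDerivAt (hasF_coord k x)]
  simp [Pi.single_apply]

@[simp] lemma pd_neg_coord (j k : Fin 4) (x : Fin 4 → ℝ) :
    pd j (fun y => -y k) x = -(if k = j then 1 else 0) := by
  rw [pd_of_hasFDerivAt (f := fun y => -y k) (hasF_coord k x).neg]
  simp [Pi.single_apply]

@[simp] lemma pd_sub13 (j : Fin 4) (x : Fin 4 → ℝ) :
    pd j (fun y => -y 1 - y 3) x =
      -(if (1:Fin 4) = j then (1:ℝ) else 0) - (if (3:Fin 4) = j then 1 else 0) := by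
  rw [pd_of_hasFDerivAt (f := fun y => -y 1 - y 3) ((hasF_coord 1 x).neg.sub (hasF_coord 3 x))]
  simp [Pi.single_apply]

@[simp] lemma pd_add13 (j : Fin 4) (x : Fin 4 → ℝ) :
    pd j (fun y => y 1 + y 3) x =
      (if (1:Fin 4) = j then (1:ℝ) else 0) + (if (3:Fin 4) = j then 1 else 0) := by
  rw [pd_of_hasFDerivAt (f := fun y => y 1 + y 3) ((hasF_coord 1 x).add (hasF_coord 3 x))]
  simp [Pi.single_apply]

lemma pd_Bdiv (B : ℝ) (j : Fin 4) (x : Fin 4 → ℝ) (hx : x 1 + x 3 ≠ 0) :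
    pd j (fun y => B / (y 1 + y 3)) x =
      -(B / (x 1 + x 3)^2) *
        ((if (1:Fin 4) = j then (1:ℝ) else 0) + (if (3:Fin 4) = j then 1 else 0)) := by
  have hu := (hasF_coord 1 x).add (hasF_coord 3 x)
  have h1 : HasFDerivAt (fun y : Fin 4 → ℝ => ((y 1 + y 3))⁻¹)
      (((1 : ℝ →L[ℝ] ℝ).smulRight (-((x 1 + x 3) ^ 2)⁻¹)).comp
        ((ContinuousLinearMap.proj 1 : (Fin 4 → ℝ) →L[ℝ] ℝ) + ContinuousLinearMap.proj 3)) x :=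
    (hasFDerivAt_inv hx).comp x hu
  have h2 := h1.const_mul B
  have heq : (fun y : Fin 4 → ℝ => B / (y 1 + y 3)) = fun y => B * (y 1 + y 3)⁻¹ := by
    funext y; rw [div_eq_mul_inv]
  rw [heq, pd_of_hasFDerivAt h2]
  simp [Pi.single_apply]
  split_ifs <;> ring

lemma Mopen : IsOpen {x : Fin 4 → ℝ | 0 < x 1 + x 3} :=
  isOpen_lt continuous_const ((continuous_apply 1).add (continuous_apply 3))

lemma Mconvex : Convex ℝ {x : Fin 4 → ℝ | 0 < x 1 + x 3} := by
  have := (convex_Ioi (0:ℝ)).linear_preimage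
    ((LinearMap.proj 1 : (Fin 4 → ℝ) →ₗ[ℝ] ℝ) + LinearMap.proj 3)
  simpa [Set.preimage, Set.Ioi] using this

/-- A continuous linear map vanishing on the standard basis vectors is zero. -/
lemma clm_eq_zero {L : (Fin 4 → ℝ) →L[ℝ] ℝ} (h0 : L (Pi.single 0 1) = 0)
    (h1 : L (Pi.single 1 1) = 0) (h2 : L (Pi.single 2 1) = 0)
    (h3 : L (Pi.single 3 1) = 0) : L = 0 := by
  apply ContinuousLinearMap.coe_injective
  apply Module.Basis.ext (Pi.basisFun ℝ (Fin 4))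
  intro i
  simp only [Pi.basisFun_apply, LinearMap.zero_apply, ContinuousLinearMap.coe_coe]
  fin_cases i
  · exact h0
  · exact h1
  · exact h2
  · exact h3

lemma fderiv_eq_pd (j : Fin 4) (f : (Fin 4 → ℝ) → ℝ) (x : Fin 4 → ℝ) :
    fderiv ℝ f x (Pi.single j 1) = pd j f x := rfl

end Helpers

/-- Class P_{6,6}, on the domain {x² + x⁴ > 0}. -/
theorem class_P66 (A : (Fin 4 → ℝ) → Fin 4 → ℝ)
    (hA : ContDiffOn ℝ 1 A {x : Fin 4 → ℝ | 0 < x 1 + x 3}) :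
    (PInvariantOn e1 A {x | 0 < x 1 + x 3} ∧
      PInvariantOn e3 A {x | 0 < x 1 + x 3} ∧
      PInvariantOn (fun _ => ![0, 1, 0, -1]) A {x | 0 < x 1 + x 3} ∧
      PInvariantOn (fun x => ![-x 1 - x 3, x 0, 0, -x 0]) A {x | 0 < x 1 + x 3} ∧
      PInvariantOn (fun x => ![0, -x 2, x 1 + x 3, x 2]) A {x | 0 < x 1 + x 3} ∧
      PInvariantOn e24 A {x | 0 < x 1 + x 3}) ↔
      ∃ B : ℝ, ∀ x ∈ {x : Fin 4 → ℝ | 0 < x 1 + x 3},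
        A x 0 = 0 ∧ A x 2 = 0 ∧
        A x 1 = B / (x 1 + x 3) ∧ A x 3 = B / (x 1 + x 3) := by
  constructor
  · rintro ⟨H1, H3, Hm, Hb, Hc, H24⟩
    -- basic pointwise consequences
    have P0 : ∀ x ∈ {x : Fin 4 → ℝ | 0 < x 1 + x 3}, ∀ i,
        pd 0 (fun y => A y i) x = 0 := by
      intro x hx i
      have h := H1 x hx i
      simpa [lieCov, Fin.sum_univ_four, e1] using h
    have P2 : ∀ x ∈ {x : Fin 4 → ℝ | 0 < x 1 + x 3}, ∀ i,
        pd 2 (fun y => A y i) x = 0 := by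
      intro x hx i
      have h := H3 x hx i
      simpa [lieCov, Fin.sum_univ_four, e3] using h
    have P13 : ∀ x ∈ {x : Fin 4 → ℝ | 0 < x 1 + x 3}, ∀ i,
        pd 1 (fun y => A y i) x = pd 3 (fun y => A y i) x := by
      intro x hx i
      have h := Hm x hx i
      simp [lieCov, Fin.sum_univ_four] at h
      linarith
    have hA0 : ∀ x ∈ {x : Fin 4 → ℝ | 0 < x 1 + x 3}, A x 0 = 0 := by
      intro x hx
      have h := Hb x hx 1
      simp [lieCov, Fin.sum_univ_four, P0 x hx] at h
      have h13 := P13 x hx 1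
      rw [h13] at h
      linarith
    have hA13 : ∀ x ∈ {x : Fin 4 → ℝ | 0 < x 1 + x 3}, A x 1 = A x 3 := by
      intro x hx
      have h := Hb x hx 0
      simp [lieCov, Fin.sum_univ_four, P0 x hx] at h
      have h13 := P13 x hx 0
      rw [h13] at h
      linarith
    have hA2 : ∀ x ∈ {x : Fin 4 → ℝ | 0 < x 1 + x 3}, A x 2 = 0 := by
      intro x hx
      have h := Hc x hx 1
      simp [lieCov, Fin.sum_univ_four, P2 x hx] at h
      have h13 := P13 x hx 1
      rw [h13] at h
      linarith
    have hode : ∀ x ∈ {x : Fin 4 → ℝ | 0 < x 1 + x 3},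
        (x 1 + x 3) * pd 1 (fun y => A y 1) x + A x 3 = 0 := by
      intro x hx
      have h := H24 x hx 1
      simp [lieCov, Fin.sum_univ_four, e24] at h
      have h13 := P13 x hx 1
      rw [h13] at h ⊢
      linarith
    -- the function g = (x1+x3) * A x 1 has vanishing derivative on M
    set M : Set (Fin 4 → ℝ) := {x : Fin 4 → ℝ | 0 < x 1 + x 3} with hMdef
    set g : (Fin 4 → ℝ) → ℝ := fun y => (y 1 + y 3) * A y 1 with hgdef
    have hdA : ∀ x ∈ M, DifferentiableAt ℝ (fun y => A y 1) x := by
      intro x hx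
      exact (differentiableAt_pi.mp
        ((hA.contDiffAt (Mopen.mem_nhds hx)).differentiableAt one_ne_zero)) 1
    have hg : ∀ x ∈ M, HasFDerivAt g
        ((x 1 + x 3) • (fderiv ℝ (fun y => A y 1) x)
          + (A x 1) • ((ContinuousLinearMap.proj 1 : (Fin 4 → ℝ) →L[ℝ] ℝ)
              + ContinuousLinearMap.proj 3)) x := by
      intro x hx
      exact ((hasF_coord 1 x).add (hasF_coord 3 x)).mul ((hdA x hx).hasFDerivAt)
    have hg0 : ∀ x ∈ M, fderiv ℝ g x = 0 := by
      intro x hx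
      rw [(hg x hx).fderiv]
      have hP0 := P0 x hx 1
      have hP2 := P2 x hx 1
      have hP13 := P13 x hx 1
      have h2 := hA13 x hx
      have h1 := hode x hx
      refine clm_eq_zero ?_ ?_ ?_ ?_ <;>
        simp only [ContinuousLinearMap.add_apply, ContinuousLinearMap.smul_apply,
          ContinuousLinearMap.proj_apply, smul_eq_mul, fderiv_eq_pd, Pi.single_apply]
      · rw [hP0]; simp
      · have : (x 1 + x 3) * pd 1 (fun y => A y 1) x + A x 1 = 0 := by linarith
        simpa using this
      · rw [hP2]; simp
      · rw [← hP13]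
        have : (x 1 + x 3) * pd 1 (fun y => A y 1) x + A x 1 = 0 := by linarith
        simpa using this
    have hgd : DifferentiableOn ℝ g M := fun x hx =>
      ((hg x hx).differentiableAt).differentiableWithinAt
    have hx₀ : (![0,1,0,0] : Fin 4 → ℝ) ∈ M := by
      simp [hMdef]
    have hconst : ∀ x ∈ M, g x = g ![0,1,0,0] := by
      intro x hx
      have hb : ∀ y ∈ M, ‖fderivWithin ℝ g M y‖ ≤ 0 := by
        intro y hy
        rw [fderivWithin_of_isOpen Mopen hy, hg0 y hy]
        simp
      have := Mconvex.norm_image_sub_le_of_norm_fderivWithin_le hgd hb hx₀ hx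
      simp at this
      linarith
    refine ⟨g ![0,1,0,0], ?_⟩
    intro x hx
    have hu : (0:ℝ) < x 1 + x 3 := hx
    have hne : x 1 + x 3 ≠ 0 := ne_of_gt hu
    have hgx := hconst x hx
    have hA1 : A x 1 = g ![0,1,0,0] / (x 1 + x 3) := by
      rw [← hgx, hgdef]
      field_simp
    exact ⟨hA0 x hx, hA2 x hx, hA1, by rw [← hA13 x hx]; exact hA1⟩
  · rintro ⟨B, hB⟩
    set M : Set (Fin 4 → ℝ) := {x : Fin 4 → ℝ | 0 < x 1 + x 3} with hMdef
    have key : ∀ x ∈ M,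
        (∀ j, pd j (fun y => A y 0) x = 0) ∧
        (∀ j, pd j (fun y => A y 2) x = 0) ∧
        (∀ j, pd j (fun y => A y 1) x =
          -(B / (x 1 + x 3)^2) *
            ((if (1:Fin 4) = j then (1:ℝ) else 0) + (if (3:Fin 4) = j then 1 else 0))) ∧
        (∀ j, pd j (fun y => A y 3) x =
          -(B / (x 1 + x 3)^2) *
            ((if (1:Fin 4) = j then (1:ℝ) else 0) + (if (3:Fin 4) = j then 1 else 0))) := by
      intro x hx
      have hne : x 1 + x 3 ≠ 0 := ne_of_gt hx
      have hMn : M ∈ nhds x := Mopen.mem_nhds hx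
      refine ⟨fun j => ?_, fun j => ?_, fun j => ?_, fun j => ?_⟩
      · rw [pd_congr (Filter.eventually_of_mem hMn (fun y hy => (hB y hy).1)) j]
        simp
      · rw [pd_congr (Filter.eventually_of_mem hMn (fun y hy => (hB y hy).2.1)) j]
        simp
      · rw [pd_congr (Filter.eventually_of_mem hMn (fun y hy => (hB y hy).2.2.1)) j]
        exact pd_Bdiv B j x hne
      · rw [pd_congr (Filter.eventually_of_mem hMn (fun y hy => (hB y hy).2.2.2)) j]
        exact pd_Bdiv B j x hne
    refine ⟨?_, ?_, ?_, ?_, ?_, ?_⟩ <;> intro x hx i <;>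
      obtain ⟨q0, q2, q1, q3⟩ := key x hx <;>
      obtain ⟨a0, a2, a1, a3⟩ := hB x hx <;>
      have hne : x 1 + x 3 ≠ 0 := ne_of_gt hx <;>
      fin_cases i <;>
      simp [lieCov, Fin.sum_univ_four, e1, e3, e24, q0, q2, q1, q3, a0, a2, a1, a3] <;>
      field_simp <;>
      ring
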